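/- Let A be a k-subalgebra of k[x] with field of fractions K, let Φ ∈ A[y] be nonzero, g ∈ k[x] nonzero, and w ∈ Γ^n. If g^w is transcendental over K^w, then m_w^g(Φ) = 0 and deg_w Φ(g) = deg_w^g Φ. -/

import Mathlib

/-!
Expand `Φ(g) = ∑ φᵢ gⁱ` and let `D = deg_w^g Φ`. Every term has `w`-degree at most `D`,
and since taking leading forms is multiplicative, the `w`-homogeneous component of `Φ(g)`
of degree `D` is `∑ φᵢ^w (g^w)ⁱ` over the indices with `deg_w (φᵢ gⁱ) = D`, i.e.
`Φ^{w,g}(g^w)`. This is a nonzero polynomial with coefficients in `A^w` evaluated at `g^w`,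
so it does not vanish when `g^w` is transcendental over `K^w`. Hence `deg_w Φ(g) = D`,
which is the defining condition of `m_w^g(Φ)` at `i = 0`.
-/

open MvPolynomial Polynomial

set_option synthInstance.maxHeartbeats 1000000
set_option maxHeartbeats 1000000

variable {k : Type*} [Field k] [CharZero k] {n : ℕ}
variable {Γ : Type*} [AddCommGroup Γ] [LinearOrder Γ] [IsOrderedAddMonoid Γ]

/-- The `w`-degree of a multivariate polynomial, with `wdeg w 0 = ⊥ = -∞`. -/
noncomputable def wdeg (w : Fin n → Γ) (f : MvPolynomial (Fin n) k) : WithBot Γ :=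
  f.support.sup fun d => ((∑ i, d i • w i : Γ) : WithBot Γ)

/-- The leading `w`-homogeneous form `f^w` of `f`. -/
noncomputable def lform (w : Fin n → Γ) (f : MvPolynomial (Fin n) k) :
    MvPolynomial (Fin n) k :=
  letI : DecidableEq (WithBot Γ) := Classical.decEq _
  ∑ d ∈ f.support.filter
      (fun d => ((∑ i, d i • w i : Γ) : WithBot Γ) = wdeg w f),
    MvPolynomial.monomial d (f.coeff d)

/-- `deg_w^g Φ = max_i deg_w (φ_i g^i)` for `Φ = Σ_i φ_i y^i`. -/
noncomputable def wdegG (w : Fin n → Γ) (g : MvPolynomial (Fin n) k)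
    (Φ : Polynomial (MvPolynomial (Fin n) k)) : WithBot Γ :=
  Φ.support.sup fun i => wdeg w (Φ.coeff i * g ^ i)

/-- The leading form `Φ^{w,g}` of `Φ` for the grading in which `x_j` has weight `w_j`
and `y` has weight `deg_w g`: the sum of `φ_i^w y^i` over those `i` with
`deg_w (φ_i g^i) = deg_w^g Φ`. -/
noncomputable def pLform (w : Fin n → Γ) (g : MvPolynomial (Fin n) k)
    (Φ : Polynomial (MvPolynomial (Fin n) k)) : Polynomial (MvPolynomial (Fin n) k) :=
  letI : DecidableEq (WithBot Γ) := Classical.decEq _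
  ∑ i ∈ Φ.support.filter (fun i => wdeg w (Φ.coeff i * g ^ i) = wdegG w g Φ),
    Polynomial.C (lform w (Φ.coeff i)) * Polynomial.X ^ i

/-- `m_w^g(Φ) = min { i : deg_w^g (∂_y^i Φ) = deg_w ((∂_y^i Φ)(g)) }`. -/
noncomputable def mwg (w : Fin n → Γ) (g : MvPolynomial (Fin n) k)
    (Φ : Polynomial (MvPolynomial (Fin n) k)) : ℕ :=
  sInf {i : ℕ |
    wdegG w g (Polynomial.derivative^[i] Φ) = wdeg w ((Polynomial.derivative^[i] Φ).eval g)}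

/-- The `w`-degree of the differential form `dh_1 ∧ ⋯ ∧ dh_s`: the maximum over all
`s`-tuples of indices of the `w`-degree of the corresponding `s × s` Jacobian minor
plus the sum of the corresponding weights (noninjective tuples contribute `⊥`). -/
noncomputable def wedgeDeg (w : Fin n → Γ) {s : ℕ} (h : Fin s → MvPolynomial (Fin n) k) :
    WithBot Γ :=
  Finset.univ.sup fun e : Fin s → Fin n =>
    wdeg w (Matrix.det (Matrix.of fun a b : Fin s => MvPolynomial.pderiv (e b) (h a)))
      + ((∑ b, w (e b) : Γ) : WithBot Γ)

/-- The initial algebra `A^w`: the `k`-subalgebra generated by `f^w` for `f ∈ A \ {0}`. -/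
noncomputable def initAlg (w : Fin n → Γ) (A : Subalgebra k (MvPolynomial (Fin n) k)) :
    Subalgebra k (MvPolynomial (Fin n) k) :=
  Algebra.adjoin k (lform w '' ((A : Set (MvPolynomial (Fin n) k)) \ {0}))

/-- The field of fractions `K^w` of `A^w`, realized as a subfield of the fraction field
of `k[x]`. -/
noncomputable def KW (w : Fin n → Γ) (A : Subalgebra k (MvPolynomial (Fin n) k)) :
    Subfield (FractionRing (MvPolynomial (Fin n) k)) :=
  Subfield.closure
    (algebraMap (MvPolynomial (Fin n) k) (FractionRing (MvPolynomial (Fin n) k)) ''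
      (initAlg w A : Set (MvPolynomial (Fin n) k)))

/-- The field of fractions of a subalgebra `A` of `k[x]`, realized as a subfield of the
fraction field of `k[x]`. -/
noncomputable def fracSub (A : Subalgebra k (MvPolynomial (Fin n) k)) :
    Subfield (FractionRing (MvPolynomial (Fin n) k)) :=
  Subfield.closure
    (algebraMap (MvPolynomial (Fin n) k) (FractionRing (MvPolynomial (Fin n) k)) ''
      (A : Set (MvPolynomial (Fin n) k)))

/-- A polynomial is `w`-homogeneous if all its monomials have the same `w`-degree. -/
def IsWHom (w : Fin n → Γ) (f : MvPolynomial (Fin n) k) : Prop :=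
  ∃ γ : Γ, ∀ d ∈ f.support, (∑ i, d i • w i : Γ) = γ

section LeadingForm

variable {K : Type*} [Field K] {M : Type*} [AddCommGroup M] [LinearOrder M]
  {w : Fin n → M} {f P : MvPolynomial (Fin n) K} {γ : M}

theorem wdeg_eq_weightedTotalDegree' (w : Fin n → M) (f : MvPolynomial (Fin n) K) :
    wdeg w f = weightedTotalDegree' w f := by
  simp only [wdeg, weightedTotalDegree', Finsupp.weight_eq_sum]

theorem wdeg_eq_bot_iff : wdeg w f = ⊥ ↔ f = 0 := by
  rw [wdeg_eq_weightedTotalDegree', weightedTotalDegree'_eq_bot_iff]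

theorem wdeg_ne_bot (w : Fin n → M) (hf : f ≠ 0) : wdeg w f ≠ ⊥ :=
  wdeg_eq_bot_iff.not.2 hf

theorem weight_le_wdeg {d : Fin n →₀ ℕ} (hd : d ∈ f.support) :
    (Finsupp.weight w d : WithBot M) ≤ wdeg w f := by
  rw [wdeg_eq_weightedTotalDegree']
  exact Finset.le_sup (f := fun d => (Finsupp.weight w d : WithBot M)) hd

theorem wdeg_le_iff {c : WithBot M} :
    wdeg w f ≤ c ↔ ∀ d ∈ f.support, (Finsupp.weight w d : WithBot M) ≤ c := by
  rw [wdeg_eq_weightedTotalDegree', weightedTotalDegree', Finset.sup_le_iff]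

theorem wdeg_add_le (f h : MvPolynomial (Fin n) K) :
    wdeg w (f + h) ≤ max (wdeg w f) (wdeg w h) := by
  classical
  refine wdeg_le_iff.2 fun d hd => ?_
  rcases Finset.mem_union.1 (support_add hd) with hd | hd
  exacts [(weight_le_wdeg hd).trans (le_max_left _ _),
    (weight_le_wdeg hd).trans (le_max_right _ _)]

theorem wdeg_sum_le {ι : Type*} (s : Finset ι) (F : ι → MvPolynomial (Fin n) K) :
    wdeg w (∑ i ∈ s, F i) ≤ s.sup fun i => wdeg w (F i) := by
  classical
  induction s using Finset.induction_on with
  | empty => simp [wdeg_eq_bot_iff.2]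
  | insert i s hi ih =>
    rw [Finset.sum_insert hi, Finset.sup_insert]
    exact (wdeg_add_le _ _).trans (max_le_max le_rfl ih)

theorem wdeg_mul_le [IsOrderedAddMonoid M] (f h : MvPolynomial (Fin n) K) :
    wdeg w (f * h) ≤ wdeg w f + wdeg w h := by
  classical
  refine wdeg_le_iff.2 fun d hd => ?_
  obtain ⟨a, ha, b, hb, rfl⟩ := Finset.mem_add.1 (support_mul f h hd)
  rw [map_add, WithBot.coe_add]
  exact add_le_add (weight_le_wdeg ha) (weight_le_wdeg hb)

theorem weightedHomogeneousComponent_eq_zero_of_wdeg_lt (h : wdeg w f < γ) :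
    weightedHomogeneousComponent w γ f = 0 :=
  weightedHomogeneousComponent_eq_zero' γ f fun _ hd hγ =>
    (weight_le_wdeg hd).not_gt (hγ ▸ h)

theorem le_wdeg_of_weightedHomogeneousComponent_ne_zero
    (h : weightedHomogeneousComponent w γ f ≠ 0) : (γ : WithBot M) ≤ wdeg w f := by
  classical
  obtain ⟨d, hd⟩ := support_nonempty.2 h
  rw [support_weightedHomogeneousComponent, Finset.mem_filter] at hd
  exact hd.2 ▸ weight_le_wdeg hd.1

theorem wdeg_eq_of_weightedHomogeneousComponent_ne_zero (hle : wdeg w f ≤ γ)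
    (h : weightedHomogeneousComponent w γ f ≠ 0) : wdeg w f = γ :=
  hle.antisymm (le_wdeg_of_weightedHomogeneousComponent_ne_zero h)

theorem lform_eq_weightedHomogeneousComponent (h : wdeg w f = γ) :
    lform w f = weightedHomogeneousComponent w γ f := by
  classical
  ext d
  simp only [lform, coeff_weightedHomogeneousComponent, MvPolynomial.coeff_sum,
    MvPolynomial.coeff_monomial, Finset.sum_ite_eq', Finset.mem_filter,
    MvPolynomial.mem_support_iff, h, WithBot.coe_inj, Finsupp.weight_eq_sum]
  split_ifs <;> simp_all

theorem lform_zero : lform w (0 : MvPolynomial (Fin n) K) = 0 := by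
  simp [lform]

theorem weightedHomogeneousComponent_of_wdeg_le (h : wdeg w f ≤ γ) :
    weightedHomogeneousComponent w γ f = if wdeg w f = γ then lform w f else 0 := by
  split_ifs with hγ
  · exact (lform_eq_weightedHomogeneousComponent hγ).symm
  · exact weightedHomogeneousComponent_eq_zero_of_wdeg_lt (h.lt_of_ne hγ)

theorem lform_ne_zero (hf : f ≠ 0) : lform w f ≠ 0 := by
  classical
  obtain ⟨d, hd, hmax⟩ := Finset.exists_mem_eq_sup _ (support_nonempty.2 hf)
    fun d => (Finsupp.weight w d : WithBot M)
  rw [← weightedTotalDegree', ← wdeg_eq_weightedTotalDegree'] at hmax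
  rw [lform_eq_weightedHomogeneousComponent hmax]
  refine ne_zero_iff.2 ⟨d, ?_⟩
  rwa [coeff_weightedHomogeneousComponent, if_pos rfl, ← MvPolynomial.mem_support_iff]

theorem isWeightedHomogeneous_lform (h : wdeg w f = γ) :
    IsWeightedHomogeneous w (lform w f) γ :=
  lform_eq_weightedHomogeneousComponent h ▸
    weightedHomogeneousComponent_isWeightedHomogeneous γ f

theorem wdeg_lform (f : MvPolynomial (Fin n) K) : wdeg w (lform w f) = wdeg w f := by
  rcases eq_or_ne f 0 with rfl | hf
  · rw [lform_zero]
  obtain ⟨γ, hγ⟩ := WithBot.ne_bot_iff_exists.1 (wdeg_ne_bot w hf)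
  rw [← hγ, wdeg_eq_weightedTotalDegree']
  exact (isWeightedHomogeneous_lform hγ.symm).weighted_total_degree (lform_ne_zero hf)

theorem wdeg_sub_lform_lt (hf : f ≠ 0) : wdeg w (f - lform w f) < wdeg w f := by
  classical
  obtain ⟨γ, hγ⟩ := WithBot.ne_bot_iff_exists.1 (wdeg_ne_bot w hf)
  rw [← hγ, wdeg_eq_weightedTotalDegree', weightedTotalDegree',
    Finset.sup_lt_iff (WithBot.bot_lt_coe γ)]
  intro d hd
  rw [lform_eq_weightedHomogeneousComponent hγ.symm, MvPolynomial.mem_support_iff, coeff_sub,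
    coeff_weightedHomogeneousComponent] at hd
  split_ifs at hd with hdγ
  · exact absurd (sub_self _) hd
  · rw [sub_zero, ← MvPolynomial.mem_support_iff] at hd
    exact (hγ ▸ weight_le_wdeg hd).lt_of_ne (WithBot.coe_injective.ne hdγ)

theorem lform_eq_of_wdeg_sub_lt (hP : IsWeightedHomogeneous w P γ) (hP0 : P ≠ 0)
    (h : wdeg w (f - P) < γ) : lform w f = P := by
  have hcomp : weightedHomogeneousComponent w γ f = P := by
    rw [← add_sub_cancel P f, map_add, hP.weightedHomogeneousComponent_same,
      weightedHomogeneousComponent_eq_zero_of_wdeg_lt h, add_zero]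
  have hle : wdeg w f ≤ γ := by
    calc wdeg w f = wdeg w (P + (f - P)) := by rw [add_sub_cancel]
      _ ≤ max (wdeg w P) (wdeg w (f - P)) := wdeg_add_le _ _
      _ ≤ γ := max_le (by rw [wdeg_eq_weightedTotalDegree', hP.weighted_total_degree hP0]) h.le
  rw [lform_eq_weightedHomogeneousComponent
    (wdeg_eq_of_weightedHomogeneousComponent_ne_zero hle (hcomp ▸ hP0)), hcomp]

theorem lform_one : lform w (1 : MvPolynomial (Fin n) K) = 1 :=
  lform_eq_of_wdeg_sub_lt (isWeightedHomogeneous_one K w) one_ne_zero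
    (by rw [sub_self, wdeg_eq_bot_iff.2 rfl]; exact WithBot.bot_lt_coe 0)

variable [IsOrderedAddMonoid M]

theorem lform_mul (f h : MvPolynomial (Fin n) K) : lform w (f * h) = lform w f * lform w h := by
  rcases eq_or_ne f 0 with rfl | hf
  · simp [lform_zero]
  rcases eq_or_ne h 0 with rfl | hh
  · simp [lform_zero]
  obtain ⟨γ, hγ⟩ := WithBot.ne_bot_iff_exists.1 (wdeg_ne_bot w hf)
  obtain ⟨δ, hδ⟩ := WithBot.ne_bot_iff_exists.1 (wdeg_ne_bot w hh)
  refine lform_eq_of_wdeg_sub_lt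
    ((isWeightedHomogeneous_lform hγ.symm).mul (isWeightedHomogeneous_lform hδ.symm))
    (mul_ne_zero (lform_ne_zero hf) (lform_ne_zero hh)) ?_
  rw [show f * h - lform w f * lform w h
      = lform w f * (h - lform w h) + (f - lform w f) * h by ring, WithBot.coe_add]
  refine (wdeg_add_le _ _).trans_lt (max_lt ?_ ?_)
  · calc wdeg w (lform w f * (h - lform w h))
        ≤ wdeg w (lform w f) + wdeg w (h - lform w h) := wdeg_mul_le _ _
      _ < γ + δ := by
        rw [wdeg_lform, ← hγ]
        exact WithBot.add_lt_add_left WithBot.coe_ne_bot (hδ ▸ wdeg_sub_lform_lt hh)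
  · calc wdeg w ((f - lform w f) * h) ≤ wdeg w (f - lform w f) + wdeg w h := wdeg_mul_le _ _
      _ < γ + δ := by
        rw [← hδ]
        exact WithBot.add_lt_add_right WithBot.coe_ne_bot (hγ ▸ wdeg_sub_lform_lt hf)

theorem lform_pow (f : MvPolynomial (Fin n) K) (m : ℕ) : lform w (f ^ m) = lform w f ^ m := by
  induction m with
  | zero => simp [lform_one]
  | succ m ih => rw [pow_succ, lform_mul, ih, pow_succ]

end LeadingForm

theorem Polynomial.eval_ne_zero_of_transcendental {R L : Type*} [CommRing R] [Field L]
    [Algebra R L] (hinj : Function.Injective (algebraMap R L)) {F : Subfield L} {p : R[X]}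
    (hp : p ≠ 0) (hpF : ∀ i, algebraMap R L (p.coeff i) ∈ F) {x : R}
    (hx : Transcendental F (algebraMap R L x)) : p.eval x ≠ 0 := by
  obtain ⟨q, hq⟩ : p.map (algebraMap R L) ∈ lifts F.subtype :=
    (lifts_iff_coeff_lifts _).2 fun i => ⟨⟨_, hpF i⟩, (coeff_map _ _).symm⟩
  replace hq : q.map F.subtype = p.map (algebraMap R L) := hq
  have hq0 : q ≠ 0 := by
    rintro rfl
    exact (Polynomial.map_ne_zero_iff hinj).2 hp (by simpa using hq.symm)
  intro h0
  refine hx ⟨q, hq0, ?_⟩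
  rw [aeval_def]
  change eval₂ F.subtype _ q = 0
  rw [← eval_map, hq, eval_map, eval₂_at_apply, h0, map_zero]

section LeadingPolynomial

variable {K : Type*} [Field K] {M : Type*} [AddCommGroup M] [LinearOrder M]
  {w : Fin n → M} {g : MvPolynomial (Fin n) K} {Φ : (MvPolynomial (Fin n) K)[X]}

theorem wdeg_eval_le_wdegG : wdeg w (Φ.eval g) ≤ wdegG w g Φ := by
  rw [eval_eq_sum, Polynomial.sum_def]
  exact wdeg_sum_le _ _

theorem coeff_pLform (i : ℕ) :
    (pLform w g Φ).coeff i =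
      if wdeg w (Φ.coeff i * g ^ i) = wdegG w g Φ then lform w (Φ.coeff i) else 0 := by
  classical
  simp only [pLform, finsetSum_coeff, Polynomial.coeff_C_mul, Polynomial.coeff_X_pow, mul_ite,
    mul_one, mul_zero, Finset.sum_ite_eq, Finset.mem_filter, Polynomial.mem_support_iff]
  split_ifs <;> simp_all [lform_zero]

theorem pLform_ne_zero (h : wdegG w g Φ ≠ ⊥) : pLform w g Φ ≠ 0 := by
  obtain ⟨i, -, hi⟩ : ∃ i ∈ Φ.support, wdegG w g Φ = wdeg w (Φ.coeff i * g ^ i) :=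
    Finset.exists_mem_eq_sup Φ.support
    (Finset.nonempty_iff_ne_empty.2 fun h0 => h (by simp [wdegG, h0]))
    fun i => wdeg w (Φ.coeff i * g ^ i)
  have hφg : Φ.coeff i * g ^ i ≠ 0 := fun h0 => h (by rw [hi, h0, wdeg_eq_bot_iff.2 rfl])
  intro h0
  have hcoeff := coeff_pLform (w := w) (g := g) (Φ := Φ) i
  rw [h0, Polynomial.coeff_zero, if_pos hi.symm] at hcoeff
  exact lform_ne_zero (left_ne_zero_of_mul hφg) hcoeff.symm

theorem lform_mem_initAlg {A : Subalgebra K (MvPolynomial (Fin n) K)}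
    {f : MvPolynomial (Fin n) K} (hf : f ∈ A) : lform w f ∈ initAlg w A := by
  rcases eq_or_ne f 0 with rfl | hf0
  · rw [lform_zero]
    exact zero_mem _
  · exact Algebra.subset_adjoin ⟨f, ⟨hf, hf0⟩, rfl⟩

theorem coeff_pLform_mem_initAlg {A : Subalgebra K (MvPolynomial (Fin n) K)}
    (hΦA : ∀ i, Φ.coeff i ∈ A) (i : ℕ) : (pLform w g Φ).coeff i ∈ initAlg w A := by
  rw [coeff_pLform]
  split_ifs
  exacts [lform_mem_initAlg (hΦA i), zero_mem _]

variable [IsOrderedAddMonoid M]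

theorem weightedHomogeneousComponent_eval {γ : M} (hγ : wdegG w g Φ = γ) :
    weightedHomogeneousComponent w γ (Φ.eval g) = (pLform w g Φ).eval (lform w g) := by
  classical
  have hle : ∀ i ∈ Φ.support, wdeg w (Φ.coeff i * g ^ i) ≤ γ := fun i hi =>
    hγ ▸ Finset.le_sup (f := fun i => wdeg w (Φ.coeff i * g ^ i)) hi
  rw [eval_eq_sum, Polynomial.sum_def, map_sum,
    Finset.sum_congr rfl fun i hi => weightedHomogeneousComponent_of_wdeg_le (hle i hi),
    ← Finset.sum_filter]
  simp only [pLform, eval_finsetSum, Polynomial.eval_mul, Polynomial.eval_C, Polynomial.eval_pow,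
    Polynomial.eval_X, lform_mul, lform_pow, hγ]

theorem wdeg_eval_eq_wdegG (h : wdegG w g Φ ≠ ⊥ → (pLform w g Φ).eval (lform w g) ≠ 0) :
    wdeg w (Φ.eval g) = wdegG w g Φ := by
  rcases eq_or_ne (wdegG w g Φ) ⊥ with hbot | hbot
  · rw [hbot, ← le_bot_iff, ← hbot]
    exact wdeg_eval_le_wdegG
  · obtain ⟨γ, hγ⟩ := WithBot.ne_bot_iff_exists.1 hbot
    rw [← hγ]
    exact wdeg_eq_of_weightedHomogeneousComponent_ne_zero (hγ ▸ wdeg_eval_le_wdegG)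
      (by rw [weightedHomogeneousComponent_eval hγ.symm]; exact h hbot)

end LeadingPolynomial

theorem stmt4_general (A : Subalgebra k (MvPolynomial (Fin n) k))
    (Φ : Polynomial (MvPolynomial (Fin n) k)) (hΦA : ∀ i, Φ.coeff i ∈ A)
    (g : MvPolynomial (Fin n) k) (w : Fin n → Γ)
    (htr : Transcendental (KW w A)
      (algebraMap (MvPolynomial (Fin n) k) (FractionRing (MvPolynomial (Fin n) k))
        (lform w g))) :
    mwg w g Φ = 0 ∧ wdeg w (Φ.eval g) = wdegG w g Φ := by
  have hdeg : wdeg w (Φ.eval g) = wdegG w g Φ :=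
    wdeg_eval_eq_wdegG fun hbot => eval_ne_zero_of_transcendental
      (IsFractionRing.injective _ _) (pLform_ne_zero hbot)
      (fun i => Subfield.subset_closure
        (Set.mem_image_of_mem _ (coeff_pLform_mem_initAlg hΦA i))) htr
  exact ⟨Nat.sInf_eq_zero.2 (Or.inl (by simpa using hdeg.symm)), hdeg⟩

/-- If `A` is a `k`-subalgebra of `k[x]`, `Φ ∈ A[y]` nonzero, `g ∈ k[x]` nonzero, and
`g^w` is transcendental over `K^w` (the fraction field of `A^w`), then `m_w^g(Φ) = 0`
and `deg_w Φ(g) = deg_w^g Φ`. -/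
theorem stmt4 (A : Subalgebra k (MvPolynomial (Fin n) k))
    (Φ : Polynomial (MvPolynomial (Fin n) k)) (hΦ : Φ ≠ 0) (hΦA : ∀ i, Φ.coeff i ∈ A)
    (g : MvPolynomial (Fin n) k) (hg : g ≠ 0) (w : Fin n → Γ)
    (htr : Transcendental (KW w A)
      (algebraMap (MvPolynomial (Fin n) k) (FractionRing (MvPolynomial (Fin n) k))
        (lform w g))) :
    mwg w g Φ = 0 ∧ wdeg w (Φ.eval g) = wdegG w g Φ :=
  stmt4_general A Φ hΦA g w htr
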